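/- Let P and Q be finite posets that are both LYM posets and log-concave. Then the product poset P × Q (with componentwise order) is a LYM poset. -/

import Mathlib

/-- The rank of an element of a (finite) poset: the length of the longest
chain strictly below it (equivalently, `r(x) = 0` for minimal `x` and
`r(x) = max {r(y) : y < x} + 1` otherwise). -/
noncomputable def rk {P : Type*} [Preorder P] (x : P) : ℕ :=
  (Order.height x).toNat

/-- The `k`-th layer of a poset: the set of elements of rank `k`. -/
def layerSet (P : Type*) [Preorder P] (k : ℕ) : Set P := {x : P | rk x = k}

/-- The size of the `k`-th layer. -/
noncomputable def layerCard (P : Type*) [Preorder P] (k : ℕ) : ℕ := (layerSet P k).ncard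

/-- A finite poset is LYM if every antichain `A` satisfies
`∑_{x ∈ A} 1 / |P_{r(x)}| ≤ 1`. -/
def IsLYM (P : Type*) [PartialOrder P] [Fintype P] : Prop :=
  ∀ A : Finset P, IsAntichain (· ≤ ·) (A : Set P) →
    ∑ x ∈ A, (1 : ℝ) / layerCard P (rk x) ≤ 1

/-- A poset is log-concave if its layer sizes `p_k` satisfy
`p_k ^ 2 ≥ p_{k-1} * p_{k+1}` for all `k ≥ 1`. -/
def LayerLogConcave (P : Type*) [Preorder P] : Prop :=
  ∀ k : ℕ, 1 ≤ k → layerCard P (k - 1) * layerCard P (k + 1) ≤ layerCard P k ^ 2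

/-!
A finite poset is LYM iff between any two consecutive layers there is a normalized flow: a
transport plan along `<` carrying the uniform distribution on layer `k` onto the uniform
distribution on layer `k + 1`. LYM gives the normalized matching property
`|S| / p_k ≤ |∇S| / p_{k+1}` for `S` in layer `k` with upper shadow `∇S`, which Hall's
theorem, applied to `p_{k+1}` copies of layer `k` and `p_k` copies of layer `k + 1`, turns into
such a flow; conversely, a flow lets one push the top layer of an antichain down to its lower
shadow without decreasing its LYM sum.

In `P × Q` the uniform distribution on layer `n` is a mixture of the products of the uniform
distributions on the blocks `P_i × Q_{n-i}`. Send a share `α i` of block `i` up along the flow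
of `P` and the rest `β i` along the flow of `Q`: this yields the uniform distribution on layer
`n + 1` as soon as `α` and `β` solve a triangular "staircase" system. Its solution is
nonnegative if and only if the distributions of the first coordinate on layers `n` and `n + 1`
are interleaved in the sense of prefix sums, and this follows from log-concavity, which makes
the ratios `p_{i+1} / p_i` and `q_{j+1} / q_j` nonincreasing.
-/

open Finset
open scoped Classical

section Rank

variable {α : Type*} [Preorder α] [Fintype α]

lemma height_lt_top (x : α) : Order.height x < ⊤ :=
  (Order.height_le fun p _ ↦ by exact_mod_cast p.length_lt_card.le).trans_lt
    (ENat.natCast_lt_top _)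

lemma height_eq_rk (x : α) : Order.height x = rk x :=
  (ENat.natCast_toNat (height_lt_top x).ne_top).symm

lemma rk_strictMono : StrictMono (rk : α → ℕ) := fun x y h ↦ by
  have := Order.height_strictMono h (height_lt_top x)
  rwa [height_eq_rk, height_eq_rk, Nat.cast_lt] at this

lemma rk_mono : Monotone (rk : α → ℕ) := fun x y h ↦ by
  have := Order.height_mono h
  rwa [height_eq_rk, height_eq_rk, Nat.cast_le] at this

lemma exists_le_rk_eq {x : α} {c : ℕ} (hc : c ≤ rk x) : ∃ y ≤ x, rk y = c := by
  rcases hc.eq_or_lt with rfl | hc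
  · exact ⟨x, le_rfl, rfl⟩
  obtain ⟨y, hyx, hy⟩ :=
    (Order.coe_lt_height_iff (height_lt_top x)).mp (by rwa [height_eq_rk, Nat.cast_lt])
  exact ⟨y, hyx.le, by rwa [height_eq_rk, Nat.cast_inj] at hy⟩

lemma rk_prod {P Q : Type*} [Preorder P] [Fintype P] [Preorder Q] [Fintype Q] (u : P × Q) :
    rk u = rk u.1 + rk u.2 := by
  have hf : StrictMono fun v : P × Q ↦ rk v.1 + rk v.2 := fun v w h ↦ by
    rcases Prod.lt_iff.mp h with ⟨h1, h2⟩ | ⟨h1, h2⟩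
    · exact Nat.add_lt_add_of_lt_of_le (rk_strictMono h1) (rk_mono h2)
    · exact Nat.add_lt_add_of_le_of_lt (rk_mono h1) (rk_strictMono h2)
  have := Order.height_eq_of_strictMono _ hf (fun v b hb ↦ ?_) u
  · rwa [height_eq_rk, Order.height_nat, Nat.cast_inj] at this
  obtain ⟨x, hx, hxr⟩ := exists_le_rk_eq (min_le_right b (rk v.1))
  obtain ⟨y, hy, hyr⟩ := exists_le_rk_eq (x := v.2) (c := b - min b (rk v.1)) (by omega)
  refine ⟨(x, y), lt_of_le_not_ge ⟨hx, hy⟩ fun h ↦ ?_, by simp only; omega⟩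
  have h1 : rk v.1 ≤ rk x := rk_mono h.1
  have h2 : rk v.2 ≤ rk y := rk_mono h.2
  omega

end Rank

noncomputable def layer (α : Type*) [Preorder α] [Fintype α] (k : ℕ) : Finset α :=
  {x | rk x = k}

section Layer

variable {α : Type*} [Preorder α] [Fintype α]

@[simp] lemma mem_layer {x : α} {k : ℕ} : x ∈ layer α k ↔ rk x = k := by simp [layer]

lemma layerCard_eq_card (k : ℕ) : layerCard α k = #(layer α k) := by
  rw [layerCard, ← Set.ncard_coe_finset]
  congr
  ext
  simp [layerSet]

lemma layerCard_rk_pos (x : α) : 0 < layerCard α (rk x) := by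
  rw [layerCard_eq_card]
  exact card_pos.mpr ⟨x, mem_layer.mpr rfl⟩

lemma layerCard_pos_of_le {j k : ℕ} (hjk : j ≤ k) (hk : 0 < layerCard α k) :
    0 < layerCard α j := by
  rw [layerCard_eq_card] at hk
  obtain ⟨x, hx⟩ := card_pos.mp hk
  obtain ⟨y, -, rfl⟩ := exists_le_rk_eq (x := x) (c := j) (by rwa [mem_layer.mp hx])
  exact layerCard_rk_pos y

lemma sum_one_div_layerCard_of_subset_layer {A : Finset α} {k : ℕ} (hA : A ⊆ layer α k) :
    ∑ x ∈ A, (1 : ℝ) / layerCard α (rk x) = #A / layerCard α k := by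
  rw [sum_congr rfl fun x hx ↦ by rw [mem_layer.mp (hA hx)], sum_const, nsmul_eq_mul,
    mul_one_div]

lemma layerCard_prod {P Q : Type*} [Preorder P] [Fintype P] [Preorder Q] [Fintype Q] (n : ℕ) :
    layerCard (P × Q) n = ∑ i ∈ range (n + 1), layerCard P i * layerCard Q (n - i) := by
  have hlayer :
      layer (P × Q) n = (range (n + 1)).biUnion fun i ↦ layer P i ×ˢ layer Q (n - i) := by
    ext ⟨x, y⟩
    simp only [mem_layer, rk_prod, mem_biUnion, mem_range, mem_product]
    exact ⟨fun h ↦ ⟨rk x, by omega, rfl, by omega⟩, fun ⟨i, hi, hx, hy⟩ ↦ by omega⟩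
  rw [layerCard_eq_card, hlayer, card_biUnion]
  · simp [layerCard_eq_card]
  · intro i _ j _ hij
    simp only [disjoint_left, mem_product, mem_layer]
    exact fun u hu hu' ↦ hij (hu.1.symm.trans hu'.1)

lemma LayerLogConcave.layerCard_mul_le (hlc : LayerLogConcave α) {j l : ℕ} (hjl : j ≤ l) :
    layerCard α j * layerCard α (l + 1) ≤ layerCard α (j + 1) * layerCard α l := by
  induction l, hjl using Nat.le_induction with
  | base => rw [mul_comm]
  | succ l hjl ih =>
    set p := layerCard α
    rcases (p (l + 1)).eq_zero_or_pos with h0 | hpos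
    · have : p (l + 2) = 0 :=
        Nat.eq_zero_of_not_pos fun h ↦ (layerCard_pos_of_le (by omega) h).ne' h0
      rw [this, mul_zero]
      exact Nat.zero_le _
    have hadj : p l * p (l + 2) ≤ p (l + 1) ^ 2 := hlc (l + 1) (by omega)
    refine Nat.le_of_mul_le_mul_right ?_ (layerCard_pos_of_le l.le_succ hpos)
    calc p j * p (l + 2) * p l = p j * (p l * p (l + 2)) := by ring
      _ ≤ p j * p (l + 1) ^ 2 := Nat.mul_le_mul_left _ hadj
      _ = p j * p (l + 1) * p (l + 1) := by ring
      _ ≤ p (j + 1) * p l * p (l + 1) := Nat.mul_le_mul_right _ ih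
      _ = p (j + 1) * p (l + 1) * p l := by ring

end Layer

structure IsTransport {α β : Type*} [Fintype α] [Fintype β] (r : α → β → Prop) (μ : α → ℝ)
    (ν : β → ℝ) (π : α → β → ℝ) : Prop where
  nonneg : ∀ x y, 0 ≤ π x y
  rel_of_ne_zero : ∀ x y, π x y ≠ 0 → r x y
  marginal_fst : ∀ x, ∑ y, π x y = μ x
  marginal_snd : ∀ y, ∑ x, π x y = ν y

namespace IsTransport

section General

variable {α β : Type*} [Fintype α] [Fintype β] {r : α → β → Prop} {μ : α → ℝ} {ν : β → ℝ}
  {π : α → β → ℝ}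

lemma transpose (h : IsTransport r μ ν π) :
    IsTransport (fun y x ↦ r x y) ν μ (fun y x ↦ π x y) :=
  ⟨fun y x ↦ h.nonneg x y, fun y x ↦ h.rel_of_ne_zero x y, h.marginal_snd, h.marginal_fst⟩

lemma congr {μ' : α → ℝ} {ν' : β → ℝ} (h : IsTransport r μ ν π) (hμ : μ = μ') (hν : ν = ν') :
    IsTransport r μ' ν' π :=
  hμ ▸ hν ▸ h

lemma marginal_fst_ne_zero (h : IsTransport r μ ν π) {x : α} {y : β} (hxy : π x y ≠ 0) :
    μ x ≠ 0 := by
  have hle : π x y ≤ μ x :=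
    h.marginal_fst x ▸ single_le_sum (fun y _ ↦ h.nonneg x y) (mem_univ y)
  exact ((lt_of_le_of_ne (h.nonneg x y) hxy.symm).trans_le hle).ne'

lemma sum_le_sum (h : IsTransport r μ ν π) {S : Finset α} {T : Finset β}
    (hST : ∀ x ∈ S, ∀ y, π x y ≠ 0 → y ∈ T) : ∑ x ∈ S, μ x ≤ ∑ y ∈ T, ν y :=
  calc ∑ x ∈ S, μ x = ∑ x ∈ S, ∑ y ∈ T, π x y := sum_congr rfl fun x hx ↦ by
        rw [← h.marginal_fst x]
        exact (sum_subset (subset_univ T) fun y _ hy ↦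
          not_not.mp fun hne ↦ hy (hST x hx y hne)).symm
    _ = ∑ y ∈ T, ∑ x ∈ S, π x y := sum_comm
    _ ≤ ∑ y ∈ T, ν y := Finset.sum_le_sum fun y _ ↦ h.marginal_snd y ▸
        sum_le_sum_of_subset_of_nonneg (subset_univ S) fun x _ _ ↦ h.nonneg x y

lemma smul {c : ℝ} (hc : 0 ≤ c) (h : c ≠ 0 → IsTransport r μ ν π) :
    IsTransport r (fun x ↦ c * μ x) (fun y ↦ c * ν y) (fun x y ↦ c * π x y) := by
  rcases eq_or_ne c 0 with rfl | hc0
  · exact ⟨by simp, by simp, by simp, by simp⟩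
  have h := h hc0
  exact ⟨fun x y ↦ mul_nonneg hc (h.nonneg x y),
    fun x y hxy ↦ h.rel_of_ne_zero x y (right_ne_zero_of_mul hxy),
    fun x ↦ by rw [← mul_sum, h.marginal_fst], fun y ↦ by rw [← mul_sum, h.marginal_snd]⟩

lemma add {μ' : α → ℝ} {ν' : β → ℝ} {π' : α → β → ℝ} (h : IsTransport r μ ν π)
    (h' : IsTransport r μ' ν' π') :
    IsTransport r (fun x ↦ μ x + μ' x) (fun y ↦ ν y + ν' y) (fun x y ↦ π x y + π' x y) := by
  refine ⟨fun x y ↦ add_nonneg (h.nonneg x y) (h'.nonneg x y), fun x y hxy ↦ ?_,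
    fun x ↦ by rw [sum_add_distrib, h.marginal_fst, h'.marginal_fst],
    fun y ↦ by rw [sum_add_distrib, h.marginal_snd, h'.marginal_snd]⟩
  by_cases hπ : π x y = 0
  · exact h'.rel_of_ne_zero x y (by simpa [hπ] using hxy)
  · exact h.rel_of_ne_zero x y hπ

lemma sum {ι : Type*} (s : Finset ι) {μ : ι → α → ℝ} {ν : ι → β → ℝ} {π : ι → α → β → ℝ}
    (h : ∀ i ∈ s, IsTransport r (μ i) (ν i) (π i)) :
    IsTransport r (fun x ↦ ∑ i ∈ s, μ i x) (fun y ↦ ∑ i ∈ s, ν i y)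
      (fun x y ↦ ∑ i ∈ s, π i x y) := by
  refine ⟨fun x y ↦ sum_nonneg fun i hi ↦ (h i hi).nonneg x y, fun x y hxy ↦ ?_,
    fun x ↦ by rw [sum_comm]; exact sum_congr rfl fun i hi ↦ (h i hi).marginal_fst x,
    fun y ↦ by rw [sum_comm]; exact sum_congr rfl fun i hi ↦ (h i hi).marginal_snd y⟩
  obtain ⟨i, hi, hne⟩ := exists_ne_zero_of_sum_ne_zero hxy
  exact (h i hi).rel_of_ne_zero x y hne

end General

section Prod

variable {P Q : Type*} [Preorder P] [Fintype P] [Preorder Q] [Fintype Q]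

lemma prod_left {μ ν : P → ℝ} {π : P → P → ℝ} (h : IsTransport (· < ·) μ ν π) {w : Q → ℝ}
    (hw : ∀ y, 0 ≤ w y) :
    IsTransport (· < ·) (fun u : P × Q ↦ μ u.1 * w u.2) (fun v ↦ ν v.1 * w v.2)
      (fun u v ↦ if u.2 = v.2 then π u.1 v.1 * w u.2 else 0) := by
  refine ⟨fun u v ↦ ?_, fun u v huv ↦ ?_, fun u ↦ ?_, fun v ↦ ?_⟩
  · split_ifs
    exacts [mul_nonneg (h.nonneg _ _) (hw _), le_rfl]
  · have hu : u.2 = v.2 := by by_contra hu; simp [hu] at huv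
    simp only [hu, if_true] at huv
    exact Prod.lt_iff.mpr (Or.inl ⟨h.rel_of_ne_zero _ _ (left_ne_zero_of_mul huv), hu.le⟩)
  · simp [Fintype.sum_prod_type, ← sum_mul, h.marginal_fst]
  · simp [Fintype.sum_prod_type, ← sum_mul, h.marginal_snd]

lemma prod_right {μ ν : Q → ℝ} {π : Q → Q → ℝ} (h : IsTransport (· < ·) μ ν π) {w : P → ℝ}
    (hw : ∀ x, 0 ≤ w x) :
    IsTransport (· < ·) (fun u : P × Q ↦ w u.1 * μ u.2) (fun v ↦ w v.1 * ν v.2)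
      (fun u v ↦ if u.1 = v.1 then w u.1 * π u.2 v.2 else 0) := by
  refine ⟨fun u v ↦ ?_, fun u v huv ↦ ?_, fun u ↦ ?_, fun v ↦ ?_⟩
  · split_ifs
    exacts [mul_nonneg (hw _) (h.nonneg _ _), le_rfl]
  · have hu : u.1 = v.1 := by by_contra hu; simp [hu] at huv
    simp only [hu, if_true] at huv
    exact Prod.lt_iff.mpr (Or.inr ⟨hu.le, h.rel_of_ne_zero _ _ (right_ne_zero_of_mul huv)⟩)
  · simp [Fintype.sum_prod_type, ← mul_sum, h.marginal_fst]
  · simp [Fintype.sum_prod_type, ← mul_sum, h.marginal_snd]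

end Prod

end IsTransport

noncomputable def uniformLayer (α : Type*) [Preorder α] (k : ℕ) (x : α) : ℝ :=
  if rk x = k then (layerCard α k : ℝ)⁻¹ else 0

def HasNormalizedFlow (α : Type*) [Preorder α] [Fintype α] : Prop :=
  ∀ k, 0 < layerCard α (k + 1) →
    ∃ π, IsTransport (· < ·) (uniformLayer α k) (uniformLayer α (k + 1)) π

section Uniform

variable {α : Type*} [Preorder α]

lemma uniformLayer_nonneg (k : ℕ) (x : α) : 0 ≤ uniformLayer α k x := by
  unfold uniformLayer
  split_ifs <;> positivity

lemma uniformLayer_of_rk_eq {k : ℕ} {x : α} (hx : rk x = k) :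
    uniformLayer α k x = 1 / layerCard α (rk x) := by
  simp [uniformLayer, hx]

lemma rk_eq_of_uniformLayer_ne_zero {k : ℕ} {x : α} (h : uniformLayer α k x ≠ 0) :
    rk x = k := by
  by_contra hx
  simp [uniformLayer, hx] at h

end Uniform

section Shadow

variable {α : Type*} [Preorder α] [Fintype α]

noncomputable def upperShadow (k : ℕ) (S : Finset α) : Finset α :=
  {y ∈ layer α (k + 1) | ∃ x ∈ S, x < y}

noncomputable def lowerShadow (k : ℕ) (T : Finset α) : Finset α :=
  {x ∈ layer α k | ∃ y ∈ T, x < y}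

lemma upperShadow_subset_layer (k : ℕ) (S : Finset α) : upperShadow k S ⊆ layer α (k + 1) :=
  filter_subset _ _

lemma HasNormalizedFlow.sum_le_sum_lowerShadow (h : HasNormalizedFlow α) {m : ℕ}
    {T : Finset α} (hT : T ⊆ layer α (m + 1)) :
    ∑ y ∈ T, (1 : ℝ) / layerCard α (rk y) ≤
      ∑ x ∈ lowerShadow m T, (1 : ℝ) / layerCard α (rk x) := by
  rcases T.eq_empty_or_nonempty with rfl | ⟨y, hy⟩
  · simp only [sum_empty]
    exact sum_nonneg fun x _ ↦ by positivity
  obtain ⟨π, hπ⟩ := h m (mem_layer.mp (hT hy) ▸ layerCard_rk_pos y)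
  calc ∑ y ∈ T, (1 : ℝ) / layerCard α (rk y) = ∑ y ∈ T, uniformLayer α (m + 1) y :=
        sum_congr rfl fun y hy ↦ (uniformLayer_of_rk_eq (mem_layer.mp (hT hy))).symm
    _ ≤ ∑ x ∈ lowerShadow m T, uniformLayer α m x :=
        hπ.transpose.sum_le_sum fun y hy x hxy ↦ mem_filter.mpr
          ⟨mem_layer.mpr (rk_eq_of_uniformLayer_ne_zero (hπ.marginal_fst_ne_zero hxy)),
            y, hy, hπ.rel_of_ne_zero x y hxy⟩
    _ = ∑ x ∈ lowerShadow m T, (1 : ℝ) / layerCard α (rk x) :=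
        sum_congr rfl fun x hx ↦ uniformLayer_of_rk_eq (mem_layer.mp (mem_filter.mp hx).1)

end Shadow

lemma sum_ite_val_fst_eq {α : Type*} (s : Finset α) (N : ℕ) (x : α) (c : ℝ) :
    ∑ i : s × Fin N, (if (i.1 : α) = x then c else 0) = if x ∈ s then N * c else 0 := by
  rw [Fintype.sum_prod_type' (f := fun (a : s) (_ : Fin N) ↦ if (a : α) = x then c else 0)]
  simp only [sum_const, card_univ, Fintype.card_fin, nsmul_eq_mul, mul_ite, mul_zero]
  rw [sum_coe_sort s fun x' ↦ if x' = x then (N : ℝ) * c else 0, sum_ite_eq']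

section LYM

variable {α : Type*} [PartialOrder α] [Fintype α]

lemma IsLYM.card_mul_layerCard_le (h : IsLYM α) {k : ℕ} {S : Finset α} (hS : S ⊆ layer α k) :
    #S * layerCard α (k + 1) ≤ #(upperShadow k S) * layerCard α k := by
  rcases (layerCard α (k + 1)).eq_zero_or_pos with hk1 | hk1
  · simp [hk1]
  have hk := layerCard_pos_of_le k.le_succ hk1
  set U := upperShadow k S
  have hU : U ⊆ layer α (k + 1) := upperShadow_subset_layer k S
  set T := layer α (k + 1) \ U
  have hanti : IsAntichain (· ≤ ·) ((S ∪ T : Finset α) : Set α) := by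
    intro u hu v hv huv hle
    have hlt := rk_strictMono (lt_of_le_of_ne hle huv)
    simp only [coe_union, Set.mem_union, mem_coe, T, mem_sdiff] at hu hv
    rcases hu with hu | ⟨hu, -⟩ <;> rcases hv with hv | ⟨hv, hvU⟩
    · have := mem_layer.mp (hS hu); have := mem_layer.mp (hS hv); omega
    · exact hvU (mem_filter.mpr ⟨hv, u, hu, lt_of_le_of_ne hle huv⟩)
    · have := mem_layer.mp hu; have := mem_layer.mp (hS hv); omega
    · have := mem_layer.mp hu; have := mem_layer.mp hv; omega
  have hdisj : Disjoint S T := disjoint_left.mpr fun x hxS hxT ↦ by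
    have := mem_layer.mp (hS hxS); have := mem_layer.mp (mem_sdiff.mp hxT).1; omega
  have hLYM := h _ hanti
  rw [sum_union hdisj, sum_one_div_layerCard_of_subset_layer hS,
    sum_one_div_layerCard_of_subset_layer sdiff_subset, card_sdiff_of_subset hU,
    ← layerCard_eq_card, Nat.cast_sub (by rw [layerCard_eq_card]; exact card_le_card hU)] at hLYM
  have hk' : (0 : ℝ) < layerCard α k := by exact_mod_cast hk
  have hk1' : (0 : ℝ) < layerCard α (k + 1) := by exact_mod_cast hk1
  rw [div_add_div _ _ hk'.ne' hk1'.ne', div_le_one (by positivity)] at hLYM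
  exact_mod_cast (by linarith : (#S : ℝ) * layerCard α (k + 1) ≤ #U * layerCard α k)

lemma IsLYM.exists_injective (h : IsLYM α) (k : ℕ) :
    ∃ f : layer α k × Fin (layerCard α (k + 1)) → layer α (k + 1) × Fin (layerCard α k),
      Function.Injective f ∧ ∀ i, (i.1 : α) < (f i).1 := by
  refine (Fintype.all_card_le_filter_rel_iff_exists_injective
    (fun (i : layer α k × Fin (layerCard α (k + 1))) (b : layer α (k + 1) × Fin (layerCard α k)) ↦
      (i.1 : α) < b.1)).mp fun A ↦ ?_
  set S : Finset α := (A.image Prod.fst).map (Function.Embedding.subtype _)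
  have hS : S ⊆ layer α k := by
    intro x hx
    obtain ⟨⟨y, hy⟩, -, rfl⟩ := mem_map.mp hx
    exact hy
  calc #A ≤ #(A.image Prod.fst ×ˢ (univ : Finset (Fin (layerCard α (k + 1))))) :=
        card_le_card fun i hi ↦ mem_product.mpr ⟨mem_image_of_mem _ hi, mem_univ _⟩
    _ = #S * layerCard α (k + 1) := by simp [S]
    _ ≤ #(upperShadow k S) * layerCard α k := h.card_mul_layerCard_le hS
    _ = #((upperShadow k S).subtype (· ∈ layer α (k + 1)) ×ˢ
          (univ : Finset (Fin (layerCard α k)))) := by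
        rw [card_product, card_subtype,
          filter_true_of_mem fun y hy ↦ upperShadow_subset_layer k S hy]
        simp [layerCard_eq_card]
    _ = _ := by
        congr 1
        ext ⟨⟨y, hy⟩, d⟩
        simp only [mem_product, mem_subtype, upperShadow, mem_filter, mem_univ, and_true, S]
        simp [hy]

theorem IsLYM.hasNormalizedFlow (h : IsLYM α) : HasNormalizedFlow α := by
  intro k hk1
  have hk := layerCard_pos_of_le k.le_succ hk1
  obtain ⟨f, hf, hrel⟩ := h.exists_injective k
  have hbij : Function.Bijective f := (Fintype.bijective_iff_injective_and_card f).mpr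
    ⟨hf, by simp only [Fintype.card_prod, Fintype.card_coe, Fintype.card_fin, layerCard_eq_card,
      mul_comm]⟩
  set c : ℝ := ((layerCard α k : ℝ) * layerCard α (k + 1))⁻¹
  refine ⟨fun x y ↦ ∑ i, if (i.1 : α) = x ∧ ((f i).1 : α) = y then c else 0,
    fun x y ↦ sum_nonneg fun i _ ↦ by split_ifs <;> positivity, fun x y hxy ↦ ?_,
    fun x ↦ ?_, fun y ↦ ?_⟩
  · obtain ⟨i, -, hi⟩ := exists_ne_zero_of_sum_ne_zero hxy
    have hxy : (i.1 : α) = x ∧ ((f i).1 : α) = y := by by_contra hc; simp [hc] at hi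
    exact hxy.1 ▸ hxy.2 ▸ hrel i
  · rw [sum_comm]
    simp only [ite_and, sum_ite_irrel, sum_ite_eq, mem_univ, if_true, sum_const_zero]
    rw [sum_ite_val_fst_eq]
    simp only [uniformLayer, mem_layer, c]
    field_simp
  · rw [sum_comm]
    simp only [ite_and, sum_ite_eq, mem_univ, if_true]
    rw [hbij.sum_comp fun b : layer α (k + 1) × Fin (layerCard α k) ↦
      if (b.1 : α) = y then c else 0]
    simp_rw [sum_ite_val_fst_eq, uniformLayer, mem_layer, c]
    field_simp

theorem HasNormalizedFlow.isLYM (h : HasNormalizedFlow α) : IsLYM α := by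
  suffices ∀ m, ∀ A : Finset α, IsAntichain (· ≤ ·) (A : Set α) → (∀ x ∈ A, rk x ≤ m) →
      ∑ x ∈ A, (1 : ℝ) / layerCard α (rk x) ≤ 1 from
    fun A hA ↦ this _ A hA fun x hx ↦ le_sup (f := rk) hx
  intro m
  induction m with
  | zero =>
    intro A _ hA
    have hA0 : A ⊆ layer α 0 := fun x hx ↦ mem_layer.mpr (Nat.le_zero.mp (hA x hx))
    rw [sum_one_div_layerCard_of_subset_layer hA0]
    refine div_le_one_of_le₀ ?_ (Nat.cast_nonneg _)
    exact_mod_cast (layerCard_eq_card (α := α) 0).symm ▸ card_le_card hA0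
  | succ m ih =>
    intro A hA hrk
    set S := A.filter (rk · = m + 1)
    set D := lowerShadow m S
    have hSA : S ⊆ A := filter_subset _ _
    have hS : S ⊆ layer α (m + 1) := fun x hx ↦ mem_layer.mpr (mem_filter.mp hx).2
    have hD : ∀ x ∈ D, rk x = m ∧ ∃ y ∈ S, x < y := fun x hx ↦
      ⟨mem_layer.mp (mem_filter.mp hx).1, (mem_filter.mp hx).2⟩
    have hAS : ∀ x ∈ A \ S, x ∈ A ∧ rk x ≤ m := fun x hx ↦ by
      obtain ⟨hxA, hxS⟩ := mem_sdiff.mp hx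
      have := hrk x hxA
      exact ⟨hxA, by by_contra; exact hxS (mem_filter.mpr ⟨hxA, by omega⟩)⟩
    have hdisj : Disjoint (A \ S) D := disjoint_left.mpr fun x hx hxD ↦ by
      obtain ⟨y, hy, hxy⟩ := (hD x hxD).2
      exact hA (hAS x hx).1 (hSA hy) hxy.ne hxy.le
    have hanti : IsAntichain (· ≤ ·) ((A \ S ∪ D : Finset α) : Set α) := by
      intro u hu v hv huv hle
      have hlt := lt_of_le_of_ne hle huv
      have hrlt := rk_strictMono hlt
      simp only [coe_union, Set.mem_union, mem_coe] at hu hv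
      rcases hv with hv | hv
      · rcases hu with hu | hu
        · exact hA (hAS u hu).1 (hAS v hv).1 huv hle
        · have := (hD u hu).1; have := (hAS v hv).2
          exact absurd hrlt (by omega)
      · obtain ⟨y, hy, hvy⟩ := (hD v hv).2
        rcases hu with hu | hu
        · exact hA (hAS u hu).1 (hSA hy) (hlt.trans hvy).ne (hlt.trans hvy).le
        · have := (hD u hu).1; have := (hD v hv).1
          exact absurd hrlt (by omega)
    have hrk' : ∀ x ∈ A \ S ∪ D, rk x ≤ m := fun x hx ↦ by
      rcases mem_union.mp hx with hx | hx
      exacts [(hAS x hx).2, (hD x hx).1.le]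
    calc ∑ x ∈ A, (1 : ℝ) / layerCard α (rk x)
        = ∑ x ∈ A \ S, (1 : ℝ) / layerCard α (rk x) + ∑ x ∈ S, (1 : ℝ) / layerCard α (rk x) :=
          (sum_sdiff hSA).symm
      _ ≤ ∑ x ∈ A \ S, (1 : ℝ) / layerCard α (rk x) + ∑ x ∈ D, (1 : ℝ) / layerCard α (rk x) :=
          add_le_add le_rfl (h.sum_le_sum_lowerShadow hS)
      _ = ∑ x ∈ A \ S ∪ D, (1 : ℝ) / layerCard α (rk x) := (sum_union hdisj).symm
      _ ≤ 1 := ih _ hanti hrk'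

end LYM

section Staircase

lemma sum_range_mul_sum_range_le {R : Type*} [CommSemiring R] [PartialOrder R]
    [IsOrderedRing R] {u v : ℕ → R} {t N : ℕ} (htN : t ≤ N)
    (h : ∀ j < t, ∀ l, t ≤ l → l < N → v j * u l ≤ u j * v l) :
    (∑ j ∈ range t, v j) * ∑ l ∈ range N, u l ≤ (∑ j ∈ range t, u j) * ∑ l ∈ range N, v l := by
  rw [← sum_range_add_sum_Ico u htN, ← sum_range_add_sum_Ico v htN, mul_add, mul_add,
    mul_comm (∑ j ∈ range t, v j)]
  simp only [sum_mul_sum]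
  exact add_le_add le_rfl (Finset.sum_le_sum fun j hj ↦ Finset.sum_le_sum fun l hl ↦
    h j (mem_range.mp hj) l (mem_Ico.mp hl).1 (mem_Ico.mp hl).2)

variable {p q : ℕ → ℕ} {n t : ℕ}

lemma sum_range_conv_succ_mul_le (hq : ∀ s r, s ≤ r → q s * q (r + 1) ≤ q (s + 1) * q r)
    (ht : t ≤ n + 1) :
    (∑ i ∈ range t, p i * q (n + 1 - i)) * ∑ i ∈ range (n + 1), p i * q (n - i) ≤
      (∑ i ∈ range t, p i * q (n - i)) * ∑ i ∈ range (n + 2), p i * q (n + 1 - i) := by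
  calc _ ≤ (∑ i ∈ range t, p i * q (n - i)) * ∑ i ∈ range (n + 1), p i * q (n + 1 - i) :=
        sum_range_mul_sum_range_le ht fun j hj l hl hlN ↦ ?_
    _ ≤ _ := Nat.mul_le_mul_left _ (sum_le_sum_of_subset (range_subset_range.mpr (by omega)))
  rw [show n + 1 - j = n - j + 1 by omega, show n + 1 - l = n - l + 1 by omega]
  calc p j * q (n - j + 1) * (p l * q (n - l))
      = p j * p l * (q (n - l) * q (n - j + 1)) := by ring
    _ ≤ p j * p l * (q (n - l + 1) * q (n - j)) := Nat.mul_le_mul_left _ (hq _ _ (by omega))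
    _ = p j * q (n - j) * (p l * q (n - l + 1)) := by ring

lemma sum_range_conv_mul_le_succ (hp : ∀ s r, s ≤ r → p s * p (r + 1) ≤ p (s + 1) * p r)
    (ht : t ≤ n + 1) :
    (∑ i ∈ range t, p i * q (n - i)) * ∑ i ∈ range (n + 2), p i * q (n + 1 - i) ≤
      (∑ i ∈ range (t + 1), p i * q (n + 1 - i)) * ∑ i ∈ range (n + 1), p i * q (n - i) := by
  rw [sum_range_succ' _ (n + 1), sum_range_succ' _ t]
  simp only [Nat.add_sub_add_right, mul_add, add_mul]
  refine add_le_add (sum_range_mul_sum_range_le ht fun j hj l hl hlN ↦ ?_) ?_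
  · calc p j * q (n - j) * (p (l + 1) * q (n - l))
        = p j * p (l + 1) * (q (n - j) * q (n - l)) := by ring
      _ ≤ p (j + 1) * p l * (q (n - j) * q (n - l)) :=
          Nat.mul_le_mul_right _ (hp _ _ (by omega))
      _ = p (j + 1) * q (n - j) * (p l * q (n - l)) := by ring
  · rw [mul_comm]
    exact Nat.mul_le_mul_left _ (sum_le_sum_of_subset (range_subset_range.mpr ht))

/-- `α i` and `β i` are the shares of block `i` of a distribution `a` moved up to blocks
`i + 1` and `i` of a distribution `b`. -/
lemma exists_staircase {a b : ℕ → ℝ}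
    (htot : ∑ i ∈ range (n + 1), a i = ∑ i ∈ range (n + 2), b i)
    (hlow : ∀ t ≤ n + 1, ∑ i ∈ range t, b i ≤ ∑ i ∈ range t, a i)
    (hhigh : ∀ t ≤ n + 1, ∑ i ∈ range t, a i ≤ ∑ i ∈ range (t + 1), b i) :
    ∃ α β : ℕ → ℝ, (∀ i ≤ n, 0 ≤ α i ∧ α i ≤ b (i + 1) ∧ 0 ≤ β i ∧ β i ≤ b i) ∧
      (∀ i, α i + β i = a i) ∧ β 0 = b 0 ∧ (∀ i, α i + β (i + 1) = b (i + 1)) ∧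
      β (n + 1) = 0 := by
  refine ⟨fun i ↦ ∑ j ∈ range (i + 1), a j - ∑ j ∈ range (i + 1), b j,
    fun i ↦ ∑ j ∈ range (i + 1), b j - ∑ j ∈ range i, a j, fun i hi ↦ ?_,
    fun i ↦ by simp [sum_range_succ], by simp, fun i ↦ by simp [sum_range_succ _ (i + 1)],
    by simp [htot]⟩
  have := hlow (i + 1) (by omega)
  have := hhigh (i + 1) (by omega)
  have := hlow i (by omega)
  have := hhigh i (by omega)
  simp only [sum_range_succ] at *
  refine ⟨?_, ?_, ?_, ?_⟩ <;> linarith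

lemma sum_range_smul_staircase {R M : Type*} [Semiring R] [AddCommMonoid M] [Module R M]
    {α β b : ℕ → R} (Y : ℕ → M) (h0 : β 0 = b 0) (hs : ∀ i, α i + β (i + 1) = b (i + 1))
    (hn : β (n + 1) = 0) :
    ∑ i ∈ range (n + 1), (α i • Y (i + 1) + β i • Y i) = ∑ i ∈ range (n + 2), b i • Y i := by
  rw [sum_range_succ' (fun i ↦ b i • Y i), ← h0, sum_add_distrib,
    sum_range_succ' (fun i ↦ β i • Y i)]
  simp_rw [← hs, add_smul, sum_add_distrib]
  rw [sum_range_succ (fun i ↦ β (i + 1) • Y (i + 1)) n, hn, zero_smul, add_zero]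
  abel

end Staircase

noncomputable def blockWeight (P Q : Type*) [Preorder P] [Preorder Q] (m i : ℕ) : ℝ :=
  layerCard P i * layerCard Q (m - i) / layerCard (P × Q) m

section Product

variable {P Q : Type*} [Preorder P] [Fintype P] [Preorder Q] [Fintype Q]

lemma uniformLayer_prod (m : ℕ) (x : P) (y : Q) :
    uniformLayer (P × Q) m (x, y) = ∑ i ∈ range (m + 1),
      blockWeight P Q m i * (uniformLayer P i x * uniformLayer Q (m - i) y) := by
  have hzero : ∀ i ≠ rk x, uniformLayer P i x = 0 := fun i hi ↦ if_neg (Ne.symm hi)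
  by_cases hx : rk x ≤ m
  · rw [sum_eq_single_of_mem (rk x) (mem_range.mpr (by omega))
      fun i _ hi ↦ by simp [hzero i hi]]
    have hp := layerCard_rk_pos x
    simp only [uniformLayer, blockWeight, rk_prod, if_true]
    by_cases hy : rk y = m - rk x
    · have hq := layerCard_rk_pos y
      rw [if_pos (by omega), if_pos hy, ← hy]
      field_simp
    · rw [if_neg (by omega), if_neg hy, mul_zero, mul_zero]
  · rw [sum_eq_zero fun i hi ↦ by simp [hzero i (by simp at hi; omega)]]
    simp [uniformLayer, rk_prod]
    omega

lemma sum_range_blockWeight {m : ℕ} (hm : 0 < layerCard (P × Q) m) :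
    ∑ i ∈ range (m + 1), blockWeight P Q m i = 1 := by
  simp only [blockWeight, ← sum_div]
  rw [div_eq_one_iff_eq (by positivity)]
  exact_mod_cast (layerCard_prod m).symm

lemma sum_range_blockWeight_succ_le (hQlc : LayerLogConcave Q) {n t : ℕ}
    (hn : 0 < layerCard (P × Q) (n + 1)) (ht : t ≤ n + 1) :
    ∑ i ∈ range t, blockWeight P Q (n + 1) i ≤ ∑ i ∈ range t, blockWeight P Q n i := by
  have hn0 := layerCard_pos_of_le n.le_succ hn
  simp only [blockWeight, ← sum_div]
  rw [div_le_div_iff₀ (by positivity) (by positivity), layerCard_prod, layerCard_prod]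
  exact_mod_cast sum_range_conv_succ_mul_le (p := layerCard P)
    (fun _ _ h ↦ hQlc.layerCard_mul_le h) ht

lemma sum_range_blockWeight_le_succ (hPlc : LayerLogConcave P) {n t : ℕ}
    (hn : 0 < layerCard (P × Q) (n + 1)) (ht : t ≤ n + 1) :
    ∑ i ∈ range t, blockWeight P Q n i ≤ ∑ i ∈ range (t + 1), blockWeight P Q (n + 1) i := by
  have hn0 := layerCard_pos_of_le n.le_succ hn
  simp only [blockWeight, ← sum_div]
  rw [div_le_div_iff₀ (by positivity) (by positivity), layerCard_prod, layerCard_prod]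
  exact_mod_cast sum_range_conv_mul_le_succ (q := layerCard Q)
    (fun _ _ h ↦ hPlc.layerCard_mul_le h) ht

theorem HasNormalizedFlow.prod (hP : HasNormalizedFlow P) (hQ : HasNormalizedFlow Q)
    (hPlc : LayerLogConcave P) (hQlc : LayerLogConcave Q) : HasNormalizedFlow (P × Q) := by
  intro n hn
  choose! πP hπP using hP
  choose! πQ hπQ using hQ
  obtain ⟨α, β, hαβ, ha, hb0, hb, hβn⟩ := exists_staircase
    (a := blockWeight P Q n) (b := blockWeight P Q (n + 1))
    (by rw [sum_range_blockWeight (layerCard_pos_of_le n.le_succ hn), sum_range_blockWeight hn])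
    (fun t ht ↦ sum_range_blockWeight_succ_le hQlc hn ht)
    (fun t ht ↦ sum_range_blockWeight_le_succ hPlc hn ht)
  have hflow := IsTransport.sum (range (n + 1)) fun i hi ↦ by
    have hin : i ≤ n := Nat.lt_succ_iff.mp (mem_range.mp hi)
    obtain ⟨hα0, hα1, hβ0, hβ1⟩ := hαβ i hin
    refine (IsTransport.smul hα0 fun hα ↦
        (hπP i ?_).prod_left (uniformLayer_nonneg (n - i))).add
      (IsTransport.smul hβ0 fun hβ ↦ (hπQ (n - i) ?_).prod_right (uniformLayer_nonneg i))
    -- a nonzero share forces the target block, hence the target layer of the factor, to be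
    -- nonempty
    · exact Nat.pos_of_ne_zero fun h0 ↦
        hα (le_antisymm (hα1.trans_eq (by simp [blockWeight, h0])) hα0)
    · exact Nat.pos_of_ne_zero fun h0 ↦ hβ (le_antisymm (hβ1.trans_eq
        (by simp [blockWeight, show n + 1 - i = n - i + 1 by omega, h0])) hβ0)
  refine ⟨_, hflow.congr (funext fun ⟨x, y⟩ ↦ ?_) (funext fun ⟨x, y⟩ ↦ ?_)⟩
  · rw [uniformLayer_prod]
    exact sum_congr rfl fun i _ ↦ by rw [← ha, add_mul]
  · calc _ = ∑ i ∈ range (n + 1),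
          (α i • (uniformLayer P (i + 1) x * uniformLayer Q (n + 1 - (i + 1)) y) +
            β i • (uniformLayer P i x * uniformLayer Q (n + 1 - i) y)) :=
          sum_congr rfl fun i hi ↦ by
            rw [mem_range] at hi
            simp only [smul_eq_mul, show n + 1 - (i + 1) = n - i by omega,
              show n + 1 - i = n - i + 1 by omega]
      _ = _ := sum_range_smul_staircase
          (fun i ↦ uniformLayer P i x * uniformLayer Q (n + 1 - i) y) hb0 hb hβn
      _ = _ := (uniformLayer_prod (n + 1) x y).symm

end Product

/-- **Harper's theorem.** If `P` and `Q` are finite log-concave LYM posets, then the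
product poset `P × Q` (with componentwise order) is a LYM poset. -/
theorem product_of_logConcave_LYM_is_LYM {P Q : Type*}
    [Fintype P] [PartialOrder P] [Fintype Q] [PartialOrder Q]
    (hP : IsLYM P) (hQ : IsLYM Q)
    (hPlc : LayerLogConcave P) (hQlc : LayerLogConcave Q) :
    IsLYM (P × Q) :=
  (hP.hasNormalizedFlow.prod hQ.hasNormalizedFlow hPlc hQlc).isLYM
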